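/- Let q ∈ ℂ, q ≠ 0, q² ≠ 1, and consider the first order differential calculus Γ₋ on O(ℂ²_q) with partial derivatives defined by dz = dx·∂_x(z) + dy·∂_y(z). The operator relations hold on O(ℂ²_q): ∂_x y = q⁻¹ y ∂_x, ∂_y x = q⁻¹ x ∂_y, ∂_x x − q⁻² x ∂_x = 1, and ∂_y y − q⁻² y ∂_y = 1 + (q⁻²−1) x ∂_x, where x, y act by left multiplication. -/

import Mathlib

open Polynomial

/-- The `q`-difference operator `D_c(f)(x) = (f(x) − f(cx))/((1−c)x)` on polynomials. -/
noncomputable def qDiff (c : ℂ) (p : Polynomial ℂ) : Polynomial ℂ :=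
  Polynomial.C ((1 - c)⁻¹) * Polynomial.divX (p - p.comp (Polynomial.C c * Polynomial.X))


lemma qDiff_one (c : ℂ) : qDiff c 1 = 0 := by simp [qDiff]

lemma qDiff_X_pow (c : ℂ) (n : ℕ) :
    qDiff c (X ^ (n+1)) = C ((1-c)⁻¹ * (1 - c^(n+1))) * X ^ n := by
  have h : (X ^ (n+1) : ℂ[X]) - (X ^ (n+1)).comp (C c * X) = C (1 - c^(n+1)) * X ^ (n+1) := by
    rw [X_pow_comp, mul_pow, ← C_pow, C_sub, sub_mul, C_1, one_mul]
  rw [qDiff, h, divX_C_mul, divX_X_pow]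
  simp [← mul_assoc, ← C_mul]

/-- For the first order differential calculus `Γ₋` on `O(ℂ²_q)`
(`xy = qyx`, `q ≠ 0`, `q² ≠ 1`), the partial derivatives `∂_x, ∂_y`
(characterized by `∂_x(g(x)h(y)) = D_{q^{-2}}(g)(x)h(y)`,
`∂_y(g(x)h(y)) = g(q⁻¹x)D_{q^{-2}}(h)(y)`) satisfy the operator relations
`∂_x y = q⁻¹ y ∂_x`, `∂_y x = q⁻¹ x ∂_y`, `∂_x x − q⁻² x ∂_x = 1`,
`∂_y y − q⁻² y ∂_y = 1 + (q⁻²−1) x ∂_x`, where `x, y` act by left multiplication. -/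
theorem statement19 {Z : Type*} [Ring Z] [Algebra ℂ Z]
    (q : ℂ) (hq0 : q ≠ 0) (hq2 : q ^ 2 ≠ 1)
    (x y : Z) (hxy : x * y = q • (y * x))
    (hspan : ∀ z : Z,
      z ∈ Submodule.span ℂ (Set.range fun nm : ℕ × ℕ => x ^ nm.1 * y ^ nm.2))
    (px py : Z →ₗ[ℂ] Z)
    (hpx : ∀ g h : Polynomial ℂ,
      px (Polynomial.aeval x g * Polynomial.aeval y h) =
        Polynomial.aeval x (qDiff ((q ^ 2)⁻¹) g) * Polynomial.aeval y h)
    (hpy : ∀ g h : Polynomial ℂ,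
      py (Polynomial.aeval x g * Polynomial.aeval y h) =
        Polynomial.aeval x (g.comp (Polynomial.C q⁻¹ * Polynomial.X)) *
          Polynomial.aeval y (qDiff ((q ^ 2)⁻¹) h)) :
    ∀ z : Z,
      px (y * z) = q⁻¹ • (y * px z) ∧
      py (x * z) = q⁻¹ • (x * py z) ∧
      px (x * z) - (q ^ 2)⁻¹ • (x * px z) = z ∧
      py (y * z) - (q ^ 2)⁻¹ • (y * py z) = z + ((q ^ 2)⁻¹ - 1) • (x * px z) := by
  set c : ℂ := (q ^ 2)⁻¹ with hc
  have h1c : (1 : ℂ) - c ≠ 0 := by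
    refine sub_ne_zero_of_ne fun h => hq2 ?_
    rw [hc] at h
    exact inv_eq_one.mp h.symm
  -- key induction principle
  have key : ∀ (f g : Z →ₗ[ℂ] Z), (∀ n m : ℕ, f (x ^ n * y ^ m) = g (x ^ n * y ^ m)) →
      ∀ z : Z, f z = g z := by
    intro f g h z
    induction hspan z using Submodule.span_induction with
    | mem w hw => obtain ⟨⟨n, m⟩, rfl⟩ := hw; exact h n m
    | zero => simp
    | add a b _ _ ha hb => simp [ha, hb]
    | smul r a _ ha => simp [ha]
  -- aeval helpers
  have aevC : ∀ (a : ℂ) (k : ℕ) (z : Z), aeval z (C a * X ^ k) = a • z ^ k := by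
    intro a k z; rw [map_mul, aeval_C, map_pow, aeval_X, Algebra.smul_def]
  have aevP : ∀ (k : ℕ) (z : Z), aeval z ((X : ℂ[X]) ^ k) = z ^ k := by
    intro k z; rw [map_pow, aeval_X]
  -- monomial formulas
  have Npx : ∀ n m : ℕ, px (x ^ (n+1) * y ^ m)
      = ((1-c)⁻¹ * (1 - c^(n+1))) • (x ^ n * y ^ m) := by
    intro n m
    have := hpx (X ^ (n+1)) (X ^ m)
    rwa [qDiff_X_pow, aevC, aevP, aevP, smul_mul_assoc] at this
  have px0 : ∀ m : ℕ, px (y ^ m) = 0 := by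
    intro m
    have := hpx 1 (X ^ m)
    simpa [qDiff_one] using this
  have Npy : ∀ n m : ℕ, py (x ^ n * y ^ (m+1))
      = ((q⁻¹) ^ n * ((1-c)⁻¹ * (1 - c^(m+1)))) • (x ^ n * y ^ m) := by
    intro n m
    have e : ((X : ℂ[X]) ^ n).comp (C q⁻¹ * X) = C (q⁻¹ ^ n) * X ^ n := by
      rw [X_pow_comp, mul_pow, ← C_pow]
    have := hpy (X ^ n) (X ^ (m+1))
    rwa [e, qDiff_X_pow, aevC, aevC, aevP, aevP, smul_mul_assoc, mul_smul_comm,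
      smul_smul] at this
  have py0 : ∀ n : ℕ, py (x ^ n) = 0 := by
    intro n
    have := hpy (X ^ n) 1
    simpa [qDiff_one] using this
  -- commutation
  have hyx : y * x = q⁻¹ • (x * y) := by
    rw [hxy, smul_smul, inv_mul_cancel₀ hq0, one_smul]
  have hyxn : ∀ n : ℕ, y * x ^ n = (q⁻¹) ^ n • (x ^ n * y) := by
    intro n
    induction n with
    | zero => simp
    | succ k ih =>
      rw [pow_succ, ← mul_assoc, ih, smul_mul_assoc, mul_assoc, hyx, mul_smul_comm,
        smul_smul, ← pow_succ, pow_succ, mul_assoc]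
  have hcomm : ∀ n m : ℕ, y * (x ^ n * y ^ m) = (q⁻¹) ^ n • (x ^ n * y ^ (m+1)) := by
    intro n m
    rw [← mul_assoc, hyxn, smul_mul_assoc, mul_assoc, ← pow_succ']
  have hxc : ∀ n m : ℕ, x * (x ^ n * y ^ m) = x ^ (n+1) * y ^ m := by
    intro n m
    rw [← mul_assoc, ← pow_succ']
  -- four claims on monomials
  intro z
  refine ⟨?_, ?_, ?_, ?_⟩
  · -- px (y z) = q⁻¹ • (y px z)
    have := key (px ∘ₗ LinearMap.mulLeft ℂ y) (q⁻¹ • (LinearMap.mulLeft ℂ y ∘ₗ px)) ?_ z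
    · simpa using this
    intro n m
    simp only [LinearMap.comp_apply, LinearMap.smul_apply, LinearMap.mulLeft_apply]
    cases n with
    | zero =>
      rw [pow_zero, one_mul, ← pow_succ', px0, px0, mul_zero, smul_zero]
    | succ k =>
      rw [hcomm, map_smul, Npx, Npx, mul_smul_comm, hcomm]
      simp only [smul_smul]
      congr 1
      ring
  · -- py (x z) = q⁻¹ • (x py z)
    have := key (py ∘ₗ LinearMap.mulLeft ℂ x) (q⁻¹ • (LinearMap.mulLeft ℂ x ∘ₗ py)) ?_ z
    · simpa using this
    intro n m
    simp only [LinearMap.comp_apply, LinearMap.smul_apply, LinearMap.mulLeft_apply]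
    cases m with
    | zero =>
      rw [pow_zero, mul_one, ← pow_succ', py0, py0, mul_zero, smul_zero]
    | succ k =>
      rw [hxc, Npy, Npy, mul_smul_comm, hxc]
      simp only [smul_smul]
      congr 1
      ring
  · -- px (x z) - c • (x px z) = z
    have := key (px ∘ₗ LinearMap.mulLeft ℂ x - c • (LinearMap.mulLeft ℂ x ∘ₗ px))
      LinearMap.id ?_ z
    · simpa using this
    intro n m
    simp only [LinearMap.sub_apply, LinearMap.comp_apply, LinearMap.smul_apply,
      LinearMap.mulLeft_apply, LinearMap.id_apply]
    cases n with
    | zero =>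
      rw [pow_zero, one_mul, px0, mul_zero, smul_zero, sub_zero,
        show (x : Z) * y ^ m = x ^ (0+1) * y ^ m by rw [zero_add, pow_one], Npx, pow_zero,
        one_mul, show ((1-c)⁻¹ * (1 - c^(0+1)) : ℂ) = 1 by field_simp; ring, one_smul]
    | succ k =>
      rw [hxc, Npx, Npx, mul_smul_comm, hxc, smul_smul, ← sub_smul]
      rw [show ((1-c)⁻¹ * (1 - c^(k+1+1)) - c * ((1-c)⁻¹ * (1 - c^(k+1))) : ℂ) = 1 by
        field_simp; ring, one_smul]
  · -- py (y z) - c • (y py z) = z + (c-1) • (x px z)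
    have := key (py ∘ₗ LinearMap.mulLeft ℂ y - c • (LinearMap.mulLeft ℂ y ∘ₗ py))
      (LinearMap.id + (c - 1) • (LinearMap.mulLeft ℂ x ∘ₗ px)) ?_ z
    · simpa using this
    intro n m
    simp only [LinearMap.sub_apply, LinearMap.add_apply, LinearMap.comp_apply,
      LinearMap.smul_apply, LinearMap.mulLeft_apply, LinearMap.id_apply]
    have hqc : ∀ k : ℕ, (q⁻¹) ^ k * (q⁻¹) ^ k = c ^ k := by
      intro k
      rw [hc, ← mul_pow, ← mul_inv, ← sq]
    have pxone : px (1 : Z) = 0 := by simpa using px0 0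
    have pyone : py (1 : Z) = 0 := by simpa using py0 0
    have pyy : ∀ i : ℕ, py (y ^ (i+1)) = ((1-c)⁻¹ * (1 - c^(i+1))) • y ^ i := by
      intro i
      have := Npy 0 i
      simpa using this
    cases n with
    | zero =>
      simp only [pow_zero, one_mul]
      cases m with
      | zero =>
        simp only [pow_zero]
        rw [pxone, mul_zero, smul_zero, add_zero, mul_one, pyone, mul_zero, smul_zero,
          sub_zero, show py y = py (y ^ (0+1)) by rw [zero_add, pow_one], pyy,
          show ((1-c)⁻¹ * (1 - c^(0+1)) : ℂ) = 1 by field_simp; ring, one_smul, pow_zero]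
      | succ j =>
        rw [px0, mul_zero, smul_zero, add_zero,
          show (y : Z) * y ^ (j+1) = y ^ (j+1+1) from (pow_succ' y (j+1)).symm, pyy, pyy,
          mul_smul_comm, show (y : Z) * y ^ j = y ^ (j+1) from (pow_succ' y j).symm,
          smul_smul, ← sub_smul,
          show ((1-c)⁻¹ * (1 - c^(j+1+1)) - c * ((1-c)⁻¹ * (1 - c^(j+1))) : ℂ) = 1 by
            field_simp; ring, one_smul]
    | succ k =>
      cases m with
      | zero =>
        have e0 : py (x ^ (k+1) * y ^ 0) = 0 := by rw [pow_zero, mul_one]; exact py0 _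
        rw [e0, mul_zero, smul_zero, sub_zero, hcomm, map_smul, Npy, Npx, mul_smul_comm,
          hxc, smul_smul, smul_smul, ← mul_assoc, hqc]
        match_scalars
        field_simp
        ring
      | succ j =>
        rw [hcomm, map_smul, Npy, Npy, mul_smul_comm, hcomm, Npx, mul_smul_comm, hxc]
        simp only [smul_smul]
        match_scalars
        have ht : ((1:ℂ) - c)⁻¹ * (1 - c) = 1 := inv_mul_cancel₀ h1c
        linear_combination ((1-c)⁻¹ * (1-c)) * hqc (k+1) + ht
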